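/- The corrected constant differs from the Linowitz–Thompson conjectured constant: Θ·(1−β) + α > θ, where θ = Σ_{k≥1} p_k²(p_k+2)/(2(p_k+1)²) · ∏_{j<k} (2+p_j(p_j+2))/(2(p_j+1)²). In particular θ < 4 < Θ·(1−β)+α. -/

import Mathlib

/-!
The four constants are series `Σ_k g(p_k) ∏_{j<k} u(p_j)` with `g(p) ≤ a p + b` and `u(p) ≤ r`,
where `r = 2/3` for `Θ, α, β` and `r = 5/9` for `θ`. Chebyshev's bound
`ψ(N) ≥ N log 2 - log (N + 1)` gives `p_k ≤ 4 (k + 2)²`, so past index `7` each series is dominated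
by a geometric series of ratio `5r/4 < 1`. (Bertrand's postulate, `p_k ≤ 2^(k+1)`, is too weak
against the products, which decay only like `2^(-k)`.) Evaluating seven terms exactly gives
`Θ ≥ 4.4`, `α ≥ 3/4` and `β ≤ 1/4`, hence `Θ (1 - β) + α ≥ 4.05`; eighteen terms of `θ` plus the
geometric tail stay below `4`.
-/

/-- `P j` is the `(j+1)`-st prime (0-indexed), as a real number. -/
noncomputable def P (j : ℕ) : ℝ := (Nat.nth Nat.Prime j : ℝ)

/-- `Θ = Σ_{k≥1} p_k²/(2(p_k+1))·∏_{j<k}(p_j+2)/(2(p_j+1))` (0-indexed). -/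
noncomputable def Theta : ℝ :=
  ∑' k : ℕ, (P k) ^ 2 / (2 * (P k + 1)) * ∏ j ∈ Finset.range k, (P j + 2) / (2 * (P j + 1))

/-- `α = Σ_{k≥1} p_k²/(2(p_k+1)²)·∏_{j<k}(p_j+2)/(2(p_j+1))` (0-indexed). -/
noncomputable def alpha : ℝ :=
  ∑' k : ℕ, (P k) ^ 2 / (2 * (P k + 1) ^ 2) * ∏ j ∈ Finset.range k, (P j + 2) / (2 * (P j + 1))

/-- `β = Σ_{k≥1} p_k/(2(p_k+1)²)·∏_{j<k}(p_j+2)/(2(p_j+1))` (0-indexed). -/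
noncomputable def beta : ℝ :=
  ∑' k : ℕ, P k / (2 * (P k + 1) ^ 2) * ∏ j ∈ Finset.range k, (P j + 2) / (2 * (P j + 1))

/-- Linowitz–Thompson's conjectured constant
`θ = Σ_{k≥1} p_k²(p_k+2)/(2(p_k+1)²)·∏_{j<k}(2+p_j(p_j+2))/(2(p_j+1)²)` (0-indexed). -/
noncomputable def thetaLT : ℝ :=
  ∑' k : ℕ, (P k) ^ 2 * (P k + 2) / (2 * (P k + 1) ^ 2) *
    ∏ j ∈ Finset.range k, (2 + P j * (P j + 2)) / (2 * (P j + 1) ^ 2)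

open Finset Real

theorem two_pow_le_mul_primeCounting_two_pow (m : ℕ) :
    2 ^ m ≤ m * Nat.primeCounting (2 ^ m) + m + 1 := by
  have hlog2 : 0 < log 2 := log_pos one_lt_two
  have hcheb : (2 : ℝ) ^ m * log 2 - log (2 ^ m + 1) ≤ Nat.primeCounting (2 ^ m) * (m * log 2) := by
    simpa [log_pow] using
      (Chebyshev.psi_ge (2 ^ m)).trans (Chebyshev.psi_le_primeCounting_mul_log (2 ^ m))
  have hlog_succ : log ((2 : ℝ) ^ m + 1) ≤ (m + 1) * log 2 := by
    rw [← Nat.cast_succ, ← log_pow, pow_succ]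
    exact log_le_log (by positivity) (by linarith [one_le_pow₀ (M₀ := ℝ) one_le_two (n := m)])
  have : (2 : ℝ) ^ m ≤ m * Nat.primeCounting (2 ^ m) + m + 1 := by nlinarith
  exact_mod_cast this

theorem nth_prime_le_two_pow {k m : ℕ} (hm : 0 < m) (h : m * (k + 2) < 2 ^ m) :
    Nat.nth Nat.Prime k ≤ 2 ^ m := by
  have hcount := two_pow_le_mul_primeCounting_two_pow m
  have hk : k < Nat.primeCounting (2 ^ m) := by
    refine Nat.lt_of_mul_lt_mul_left (a := m) ?_
    rw [mul_add] at h
    omega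
  exact Nat.le_of_lt_succ (Nat.nth_lt_of_lt_count hk)

theorem nth_prime_le_four_mul_sq (k : ℕ) : Nat.nth Nat.Prime k ≤ 4 * (k + 2) ^ 2 := by
  set L := Nat.log 2 (k + 2)
  have hlow : 2 ^ L ≤ k + 2 := Nat.pow_log_le_self 2 (by omega)
  have hhigh : k + 2 < 2 ^ (L + 1) := Nat.lt_pow_succ_log_self one_lt_two _
  have hL : 2 * (L + 1) ≤ 2 ^ (L + 1) := by
    rw [pow_succ]; linarith [Nat.lt_two_pow_self (n := L)]
  calc Nat.nth Nat.Prime k ≤ 2 ^ (2 * (L + 1)) := by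
        refine nth_prime_le_two_pow (by omega) ?_
        rw [pow_mul', sq]
        exact Nat.mul_lt_mul_of_le_of_lt hL hhigh (by positivity)
    _ = 4 * (2 ^ L) ^ 2 := by ring
    _ ≤ 4 * (k + 2) ^ 2 := by gcongr

theorem P_le_four_mul_sq (k : ℕ) : P k ≤ 4 * (k + 2) ^ 2 := by
  rw [P]; exact_mod_cast nth_prime_le_four_mul_sq k

theorem two_le_P (k : ℕ) : 2 ≤ P k := by
  have := (Nat.prime_nth_prime k).two_le
  rw [P]; exact_mod_cast this

theorem sq_add_le_mul_pow {n : ℝ} (hn : 9 ≤ n) (m : ℕ) : (n + m) ^ 2 ≤ n ^ 2 * (5 / 4) ^ m := by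
  induction m with
  | zero => simp
  | succ m ih =>
    have hm : (0 : ℝ) ≤ m := m.cast_nonneg
    calc (n + ↑(m + 1)) ^ 2 ≤ 5 / 4 * (n + m) ^ 2 := by push_cast; nlinarith
      _ ≤ 5 / 4 * (n ^ 2 * (5 / 4) ^ m) := by gcongr
      _ = n ^ 2 * (5 / 4) ^ (m + 1) := by ring

theorem P_add_le_mul_pow {K : ℕ} (hK : 7 ≤ K) (m : ℕ) :
    P (K + m) ≤ 4 * (K + 2) ^ 2 * (5 / 4) ^ m := by
  have hn : (9 : ℝ) ≤ K + 2 := by exact_mod_cast Nat.add_le_add_right hK 2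
  calc P (K + m) ≤ 4 * ((K + 2) + m) ^ 2 := by
        convert P_le_four_mul_sq (K + m) using 3; push_cast; ring
    _ ≤ 4 * (K + 2) ^ 2 * (5 / 4) ^ m := by
        rw [mul_assoc]; gcongr; exact sq_add_le_mul_pow hn m

theorem prod_range_add_le_mul_pow {u : ℕ → ℝ} {r : ℝ} (h0 : ∀ j, 0 ≤ u j) (hr : ∀ j, u j ≤ r)
    (K m : ℕ) : ∏ j ∈ range (K + m), u j ≤ (∏ j ∈ range K, u j) * r ^ m := by
  rw [prod_range_add]
  gcongr
  · exact prod_nonneg fun j _ ↦ h0 j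
  · calc ∏ j ∈ range m, u (K + j) ≤ ∏ _j ∈ range m, r :=
          prod_le_prod (fun j _ ↦ h0 _) fun j _ ↦ hr _
      _ = r ^ m := by rw [prod_const, card_range]

theorem summable_of_tail_le_geometric {f : ℕ → ℝ} {K : ℕ} {c ρ : ℝ} (hf : ∀ k, 0 ≤ f k)
    (hρ0 : 0 ≤ ρ) (hρ : ρ < 1) (h : ∀ m, f (K + m) ≤ c * ρ ^ m) : Summable f :=
  (summable_nat_add_iff K).mp <|
    ((summable_geometric_of_lt_one hρ0 hρ).mul_left c).of_nonneg_of_le (fun _ ↦ hf _)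
      fun m ↦ add_comm m K ▸ h m

theorem tsum_le_of_tail_le_geometric {f : ℕ → ℝ} {K : ℕ} {c ρ : ℝ} (hf : ∀ k, 0 ≤ f k)
    (hρ0 : 0 ≤ ρ) (hρ : ρ < 1) (h : ∀ m, f (K + m) ≤ c * ρ ^ m) :
    ∑' k, f k ≤ ∑ k ∈ range K, f k + c / (1 - ρ) := by
  have hgeom := (summable_geometric_of_lt_one hρ0 hρ).mul_left c
  have htail : Summable fun m ↦ f (m + K) :=
    (summable_nat_add_iff K).mpr (summable_of_tail_le_geometric hf hρ0 hρ h)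
  rw [← (summable_of_tail_le_geometric hf hρ0 hρ h).sum_add_tsum_nat_add K]
  gcongr
  calc ∑' m, f (m + K) ≤ ∑' m, c * ρ ^ m :=
        htail.tsum_le_tsum (fun m ↦ add_comm m K ▸ h m) hgeom
    _ = c / (1 - ρ) := by rw [tsum_mul_left, tsum_geometric_of_lt_one hρ0 hρ, div_eq_mul_inv]

noncomputable def primeSeriesTerm (g u : ℝ → ℝ) (k : ℕ) : ℝ := g (P k) * ∏ j ∈ range k, u (P j)

theorem primeSeriesTerm_nonneg {g u : ℝ → ℝ} (hg0 : ∀ p, 2 ≤ p → 0 ≤ g p)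
    (hu0 : ∀ p, 2 ≤ p → 0 ≤ u p) (k : ℕ) : 0 ≤ primeSeriesTerm g u k :=
  mul_nonneg (hg0 _ (two_le_P k)) (prod_nonneg fun j _ ↦ hu0 _ (two_le_P j))

/-- The growth `p_(K+m) ≤ 4 (K + 2)² (5/4)^m` is paid for by the decay `r^m` of the product. -/
theorem primeSeriesTerm_add_le {g u : ℝ → ℝ} {a b r : ℝ} (ha : 0 ≤ a) (hb : 0 ≤ b)
    (hg : ∀ p, 2 ≤ p → g p ≤ a * p + b) (hu0 : ∀ p, 2 ≤ p → 0 ≤ u p)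
    (hu : ∀ p, 2 ≤ p → u p ≤ r) {K : ℕ} (hK : 7 ≤ K) (m : ℕ) :
    primeSeriesTerm g u (K + m) ≤
      (4 * a * (K + 2) ^ 2 + b) * (∏ j ∈ range K, u (P j)) * (5 * r / 4) ^ m := by
  have hpow : (1 : ℝ) ≤ (5 / 4) ^ m := one_le_pow₀ (by norm_num)
  have hcoeff : g (P (K + m)) ≤ (4 * a * (K + 2) ^ 2 + b) * (5 / 4) ^ m :=
    calc g (P (K + m)) ≤ a * (4 * (K + 2) ^ 2 * (5 / 4) ^ m) + b * 1 := by
          rw [mul_one]; exact (hg _ (two_le_P _)).trans (by gcongr; exact P_add_le_mul_pow hK m)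
      _ ≤ a * (4 * (K + 2) ^ 2 * (5 / 4) ^ m) + b * (5 / 4) ^ m := by gcongr
      _ = (4 * a * (K + 2) ^ 2 + b) * (5 / 4) ^ m := by ring
  have hprod := prod_range_add_le_mul_pow (u := fun j ↦ u (P j)) (fun j ↦ hu0 _ (two_le_P j))
    (fun j ↦ hu _ (two_le_P j)) K m
  calc primeSeriesTerm g u (K + m)
      ≤ (4 * a * (K + 2) ^ 2 + b) * (5 / 4) ^ m * ((∏ j ∈ range K, u (P j)) * r ^ m) :=
        mul_le_mul hcoeff hprod (prod_nonneg fun j _ ↦ hu0 _ (two_le_P j)) (by positivity)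
    _ = (4 * a * (K + 2) ^ 2 + b) * (∏ j ∈ range K, u (P j)) * (5 * r / 4) ^ m := by
        rw [show 5 * r / 4 = 5 / 4 * r by ring, mul_pow]; ring

theorem summable_primeSeriesTerm {g u : ℝ → ℝ} {a b r : ℝ} (ha : 0 ≤ a) (hb : 0 ≤ b)
    (hg0 : ∀ p, 2 ≤ p → 0 ≤ g p) (hg : ∀ p, 2 ≤ p → g p ≤ a * p + b)
    (hu0 : ∀ p, 2 ≤ p → 0 ≤ u p) (hu : ∀ p, 2 ≤ p → u p ≤ r) (hr : r < 4 / 5) :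
    Summable (primeSeriesTerm g u) :=
  summable_of_tail_le_geometric (primeSeriesTerm_nonneg hg0 hu0)
    (by linarith [(hu0 2 le_rfl).trans (hu 2 le_rfl)]) (by linarith)
    (primeSeriesTerm_add_le ha hb hg hu0 hu le_rfl)

theorem tsum_primeSeriesTerm_le {g u : ℝ → ℝ} {a b r : ℝ} (ha : 0 ≤ a) (hb : 0 ≤ b)
    (hg0 : ∀ p, 2 ≤ p → 0 ≤ g p) (hg : ∀ p, 2 ≤ p → g p ≤ a * p + b)
    (hu0 : ∀ p, 2 ≤ p → 0 ≤ u p) (hu : ∀ p, 2 ≤ p → u p ≤ r) (hr : r < 4 / 5)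
    {K : ℕ} (hK : 7 ≤ K) :
    ∑' k, primeSeriesTerm g u k ≤ ∑ k ∈ range K, primeSeriesTerm g u k +
      (4 * a * (K + 2) ^ 2 + b) * (∏ j ∈ range K, u (P j)) / (1 - 5 * r / 4) :=
  tsum_le_of_tail_le_geometric (primeSeriesTerm_nonneg hg0 hu0)
    (by linarith [(hu0 2 le_rfl).trans (hu 2 le_rfl)]) (by linarith)
    (primeSeriesTerm_add_le ha hb hg hu0 hu hK)

def firstPrimes : List ℕ := [2, 3, 5, 7, 11, 13, 17, 19, 23, 29, 31, 37, 41, 43, 47, 53, 59, 61]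

theorem prime_and_count_firstPrimes : ∀ k < 18,
    (firstPrimes.getD k 0).Prime ∧ Nat.count Nat.Prime (firstPrimes.getD k 0) = k := by
  decide

theorem P_eq_firstPrimes {k : ℕ} (hk : k < 18) : P k = firstPrimes.getD k 0 := by
  obtain ⟨hp, hc⟩ := prime_and_count_firstPrimes k hk
  rw [P, ← Nat.nth_count hp, hc]

theorem add_two_div_le {p : ℝ} (hp : 2 ≤ p) : (p + 2) / (2 * (p + 1)) ≤ 2 / 3 := by
  rw [div_le_iff₀ (by linarith)]; linarith

theorem two_add_mul_div_le {p : ℝ} (hp : 2 ≤ p) :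
    (2 + p * (p + 2)) / (2 * (p + 1) ^ 2) ≤ 5 / 9 := by
  rw [div_le_iff₀ (by positivity)]; nlinarith

theorem add_two_div_nonneg {p : ℝ} (hp : 2 ≤ p) : 0 ≤ (p + 2) / (2 * (p + 1)) :=
  div_nonneg (by linarith) (by linarith)

noncomputable def ThetaTerm : ℕ → ℝ :=
  primeSeriesTerm (fun p ↦ p ^ 2 / (2 * (p + 1))) (fun p ↦ (p + 2) / (2 * (p + 1)))

noncomputable def alphaTerm : ℕ → ℝ :=
  primeSeriesTerm (fun p ↦ p ^ 2 / (2 * (p + 1) ^ 2)) (fun p ↦ (p + 2) / (2 * (p + 1)))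

noncomputable def betaTerm : ℕ → ℝ :=
  primeSeriesTerm (fun p ↦ p / (2 * (p + 1) ^ 2)) (fun p ↦ (p + 2) / (2 * (p + 1)))

noncomputable def thetaLTTerm : ℕ → ℝ :=
  primeSeriesTerm (fun p ↦ p ^ 2 * (p + 2) / (2 * (p + 1) ^ 2))
    (fun p ↦ (2 + p * (p + 2)) / (2 * (p + 1) ^ 2))

theorem ThetaTerm_nonneg : ∀ k, 0 ≤ ThetaTerm k :=
  primeSeriesTerm_nonneg (fun p hp ↦ div_nonneg (by positivity) (by linarith))
    fun _ ↦ add_two_div_nonneg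

theorem alphaTerm_nonneg : ∀ k, 0 ≤ alphaTerm k :=
  primeSeriesTerm_nonneg (fun _ _ ↦ by positivity) fun _ ↦ add_two_div_nonneg

theorem summable_ThetaTerm : Summable ThetaTerm :=
  summable_primeSeriesTerm (a := 1 / 2) (b := 0) (by norm_num) le_rfl
    (fun p hp ↦ div_nonneg (by positivity) (by linarith))
    (fun p hp ↦ by rw [div_le_iff₀ (by linarith)]; nlinarith)
    (fun _ ↦ add_two_div_nonneg) (fun _ ↦ add_two_div_le) (by norm_num)

theorem summable_alphaTerm : Summable alphaTerm :=
  summable_primeSeriesTerm (a := 0) (b := 1 / 2) le_rfl (by norm_num)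
    (fun _ _ ↦ by positivity)
    (fun p hp ↦ by rw [div_le_iff₀ (by positivity)]; nlinarith)
    (fun _ ↦ add_two_div_nonneg) (fun _ ↦ add_two_div_le) (by norm_num)

theorem le_Theta : 4.4 ≤ Theta := by
  refine le_trans ?_ (summable_ThetaTerm.sum_le_tsum (range 7) fun k _ ↦ ThetaTerm_nonneg k)
  simp only [sum_range_succ, prod_range_succ, sum_range_zero,
    prod_range_zero, P_eq_firstPrimes, Nat.reduceLT]
  norm_num [firstPrimes]

theorem le_alpha : 3 / 4 ≤ alpha := by
  refine le_trans ?_ (summable_alphaTerm.sum_le_tsum (range 7) fun k _ ↦ alphaTerm_nonneg k)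
  simp only [sum_range_succ, prod_range_succ, sum_range_zero,
    prod_range_zero, P_eq_firstPrimes, Nat.reduceLT]
  norm_num [firstPrimes]

theorem beta_le : beta ≤ 1 / 4 := by
  show ∑' k, betaTerm k ≤ 1 / 4
  refine (tsum_primeSeriesTerm_le (a := 0) (b := 1 / 8) le_rfl (by norm_num)
    (fun p hp ↦ div_nonneg (by linarith) (by positivity))
    (fun p hp ↦ by rw [div_le_iff₀ (by positivity)]; nlinarith)
    (fun _ ↦ add_two_div_nonneg) (fun _ ↦ add_two_div_le) (by norm_num) (le_refl 7)).trans ?_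
  simp only [primeSeriesTerm, sum_range_succ, prod_range_succ, sum_range_zero,
    prod_range_zero, P_eq_firstPrimes, Nat.reduceLT]
  norm_num [firstPrimes]

theorem thetaLT_lt_four : thetaLT < 4 := by
  show ∑' k, thetaLTTerm k < 4
  refine (tsum_primeSeriesTerm_le (a := 1 / 2) (b := 0) (by norm_num) le_rfl
    (fun p hp ↦ div_nonneg (by positivity) (by positivity))
    (fun p hp ↦ by rw [div_le_iff₀ (by positivity)]; nlinarith)
    (fun _ _ ↦ by positivity) (fun _ ↦ two_add_mul_div_le) (by norm_num)
    (by norm_num : 7 ≤ 18)).trans_lt ?_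
  simp only [primeSeriesTerm, sum_range_succ, prod_range_succ, sum_range_zero,
    prod_range_zero, P_eq_firstPrimes, Nat.reduceLT]
  norm_num [firstPrimes]

/-- The corrected constant exceeds the conjectured one: `θ < 4 < Θ·(1−β)+α`. -/
theorem corrected_exceeds_conjectured :
    thetaLT < Theta * (1 - beta) + alpha ∧ thetaLT < 4 ∧ 4 < Theta * (1 - beta) + alpha := by
  have hcorr : 4 < Theta * (1 - beta) + alpha := by
    nlinarith [le_Theta, le_alpha, beta_le]
  exact ⟨thetaLT_lt_four.trans hcorr, thetaLT_lt_four, hcorr⟩
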